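/- Let Ω and Δ be finite nonempty sets, let Γ be a digraph on Ω × Δ, and let X be a subgroup of Perm Ω and Y a subgroup of Perm Δ such that for every x ∈ X and y ∈ Y the map (u,w) ↦ (x u, y w) is an automorphism of Γ. Suppose this action of X × Y on Ω × Δ is transitive on vertices and transitive on the arcs of Γ (for any two arcs a, b of Γ some (x,y) ∈ X × Y carries a to b). Then there exist a digraph Γ₁ on Ω and a digraph Γ₂ on Δ such that Γ is isomorphic to the tensor product Γ₁ × Γ₂, every element of X is an automorphism of Γ₁ with X transitive on the arcs of Γ₁, and every element of Y is an automorphism of Γ₂ with Y transitive on the arcs of Γ₂. -/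

import Mathlib

/-- A permutation `e` is an automorphism of the digraph with adjacency `Adj`. -/
def IsDigraphAut {V : Type*} (Adj : V → V → Prop) (e : Equiv.Perm V) : Prop :=
  ∀ x y, Adj x y ↔ Adj (e x) (e y)

/-- The automorphism group of a digraph, as a subgroup of the permutation group. -/
def autGroup {V : Type*} (Adj : V → V → Prop) : Subgroup (Equiv.Perm V) where
  carrier := {e | IsDigraphAut Adj e}
  one_mem' := by intro x y; exact Iff.rfl
  mul_mem' := by
    intro a b ha hb x y
    exact (hb x y).trans (ha (b x) (b y))
  inv_mem' := by
    intro a ha x y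
    simpa using (ha (a⁻¹ x) (a⁻¹ y)).symm

/-- A digraph is arc-transitive if its automorphism group is transitive on arcs. -/
def ArcTransitive {V : Type*} (Adj : V → V → Prop) : Prop :=
  ∀ x y u v, Adj x y → Adj u v → ∃ e ∈ autGroup Adj, e x = u ∧ e y = v

/-- A subgroup of the permutation group of `V` is regular on `V`. -/
def IsRegularSub {V : Type*} (H : Subgroup (Equiv.Perm V)) : Prop :=
  ∀ u v : V, ∃! h : H, (h : Equiv.Perm V) u = v

/-- A circulant: the automorphism group contains a regular cyclic subgroup. -/
def IsCirculant {V : Type*} (Adj : V → V → Prop) : Prop :=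
  ∃ H : Subgroup (Equiv.Perm V), H ≤ autGroup Adj ∧ IsCyclic H ∧ IsRegularSub H

/-- A normal circulant: the automorphism group contains a regular cyclic subgroup
that is normal in the automorphism group. -/
def IsNormalCirculant {V : Type*} (Adj : V → V → Prop) : Prop :=
  ∃ H : Subgroup (Equiv.Perm V), H ≤ autGroup Adj ∧ IsCyclic H ∧ IsRegularSub H ∧
    ∀ e ∈ autGroup Adj, ∀ h ∈ H, e * h * e⁻¹ ∈ H

/-- Tensor (direct) product of digraphs. -/
def tensorAdj {V₁ V₂ : Type*} (Adj₁ : V₁ → V₁ → Prop) (Adj₂ : V₂ → V₂ → Prop) :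
    V₁ × V₂ → V₁ × V₂ → Prop :=
  fun p q => Adj₁ p.1 q.1 ∧ Adj₂ p.2 q.2

/-- Lexicographic product `Γ[Kbar_b]` with the edgeless digraph on `b` vertices. -/
def lexAdj {V : Type*} (Adj : V → V → Prop) (b : ℕ) : V × Fin b → V × Fin b → Prop :=
  fun p q => Adj p.1 q.1

/-- Digraph isomorphism. -/
def DigraphIso {V₁ V₂ : Type*} (Adj₁ : V₁ → V₁ → Prop) (Adj₂ : V₂ → V₂ → Prop) : Prop :=
  ∃ e : V₁ ≃ V₂, ∀ x y, Adj₁ x y ↔ Adj₂ (e x) (e y)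

/-- Connectedness: the reflexive–symmetric–transitive closure of adjacency
relates every pair of vertices. -/
def DigraphConnected {V : Type*} (Adj : V → V → Prop) : Prop :=
  ∀ u v : V, Relation.ReflTransGen (fun a b => Adj a b ∨ Adj b a) u v

/-- R-thick digraph: two distinct vertices with the same in- and out-neighbourhoods. -/
def RThick {V : Type*} (Adj : V → V → Prop) : Prop :=
  ∃ u v : V, u ≠ v ∧ (∀ w, Adj u w ↔ Adj v w) ∧ (∀ w, Adj w u ↔ Adj w v)

/-- The directed 4-cycle on `ZMod 4`. -/
def C4Adj : ZMod 4 → ZMod 4 → Prop := fun x y => y - x = 1 ∨ y - x = 3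

/-- Cayley digraph of a group `G` with connection set `S`. -/
def cayAdj (G : Type*) [Group G] (S : Set G) : G → G → Prop :=
  fun x y => y * x⁻¹ ∈ S

/-- The right-regular representation of `G` inside `Equiv.Perm G`. -/
def rightReg (G : Type*) [Group G] : Subgroup (Equiv.Perm G) where
  carrier := {e | ∃ g : G, ∀ x, e x = x * g}
  one_mem' := ⟨1, by simp⟩
  mul_mem' := by
    rintro a b ⟨g, hg⟩ ⟨h, hh⟩
    exact ⟨h * g, fun x => by simp [Equiv.Perm.mul_apply, hh, hg, mul_assoc]⟩
  inv_mem' := by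
    rintro a ⟨g, hg⟩
    refine ⟨g⁻¹, fun x => a.injective ?_⟩
    rw [Equiv.Perm.eq_inv_iff_eq.mp rfl, hg]
    simp

/-- Cayley digraph of `ZMod n` with connection set `S`. -/
def zcayAdj (n : ℕ) (S : Set (ZMod n)) : ZMod n → ZMod n → Prop :=
  fun x y => y - x ∈ S

/-- The translation subgroup of `Equiv.Perm (ZMod n)`. -/
def transSub (n : ℕ) : Subgroup (Equiv.Perm (ZMod n)) where
  carrier := {e | ∃ g : ZMod n, ∀ x, e x = x + g}
  one_mem' := ⟨0, by simp⟩
  mul_mem' := by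
    rintro a b ⟨g, hg⟩ ⟨h, hh⟩
    exact ⟨h + g, fun x => by simp [Equiv.Perm.mul_apply, hh, hg, add_assoc]⟩
  inv_mem' := by
    rintro a ⟨g, hg⟩
    refine ⟨-g, fun x => a.injective ?_⟩
    rw [Equiv.Perm.eq_inv_iff_eq.mp rfl, hg]
    simp

/-!
Take for `Γ₁` the digraph of first coordinates of arcs of `Γ` and for `Γ₂` that of second
coordinates. Every arc of `Γ` projects to arcs of both, so `Γ ≤ Γ₁ × Γ₂`. Conversely, if
`(u, v)` is the first projection of an arc `((u', w'), (v', z'))` and `(w, z)` the second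
projection of an arc `((u'', w), (v'', z))`, arc-transitivity gives `(x, y)` sending the
latter arc to the former; then `x u'' = u` and `x v'' = v`, so applying `(x, 1)` alone to the
latter arc yields the arc `((u, w), (v, z))`. Automorphisms and arc-transitivity of `X` and `Y`
pass directly to the projections.
-/

open Equiv

section TensorFactors

variable {Ω Δ : Type*}

def fstAdj (Adj : Ω × Δ → Ω × Δ → Prop) (u v : Ω) : Prop :=
  ∃ w z, Adj (u, w) (v, z)

def sndAdj (Adj : Ω × Δ → Ω × Δ → Prop) (w z : Δ) : Prop :=
  ∃ u v, Adj (u, w) (v, z)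

def ProdArcTransitive (Adj : Ω × Δ → Ω × Δ → Prop) (X : Subgroup (Perm Ω))
    (Y : Subgroup (Perm Δ)) : Prop :=
  ∀ a₁ a₂ b₁ b₂ : Ω × Δ, Adj a₁ a₂ → Adj b₁ b₂ →
    ∃ x ∈ X, ∃ y ∈ Y, Equiv.prodCongr x y a₁ = b₁ ∧ Equiv.prodCongr x y a₂ = b₂

variable {Adj : Ω × Δ → Ω × Δ → Prop} {X : Subgroup (Perm Ω)} {Y : Subgroup (Perm Δ)}

theorem IsDigraphAut.fstAdj {x : Perm Ω} {y : Perm Δ}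
    (h : IsDigraphAut Adj (Equiv.prodCongr x y)) : IsDigraphAut (fstAdj Adj) x := by
  intro u v
  constructor
  · rintro ⟨w, z, huv⟩
    exact ⟨y w, y z, (h (u, w) (v, z)).mp huv⟩
  · rintro ⟨w, z, huv⟩
    refine ⟨y⁻¹ w, y⁻¹ z, (h _ _).mpr ?_⟩
    simpa using huv

theorem IsDigraphAut.sndAdj {x : Perm Ω} {y : Perm Δ}
    (h : IsDigraphAut Adj (Equiv.prodCongr x y)) : IsDigraphAut (sndAdj Adj) y := by
  intro w z
  constructor
  · rintro ⟨u, v, hwz⟩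
    exact ⟨x u, x v, (h (u, w) (v, z)).mp hwz⟩
  · rintro ⟨u, v, hwz⟩
    refine ⟨x⁻¹ u, x⁻¹ v, (h _ _).mpr ?_⟩
    simpa using hwz

theorem ProdArcTransitive.fstAdj_arcTransitive (hat : ProdArcTransitive Adj X Y)
    {u₁ u₂ v₁ v₂ : Ω} (hu : fstAdj Adj u₁ u₂) (hv : fstAdj Adj v₁ v₂) :
    ∃ x ∈ X, x u₁ = v₁ ∧ x u₂ = v₂ := by
  obtain ⟨w, z, hu⟩ := hu
  obtain ⟨w', z', hv⟩ := hv
  obtain ⟨x, hx, y, -, h₁, h₂⟩ := hat _ _ _ _ hu hv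
  exact ⟨x, hx, congrArg Prod.fst h₁, congrArg Prod.fst h₂⟩

theorem ProdArcTransitive.sndAdj_arcTransitive (hat : ProdArcTransitive Adj X Y)
    {w₁ w₂ z₁ z₂ : Δ} (hw : sndAdj Adj w₁ w₂) (hz : sndAdj Adj z₁ z₂) :
    ∃ y ∈ Y, y w₁ = z₁ ∧ y w₂ = z₂ := by
  obtain ⟨u, v, hw⟩ := hw
  obtain ⟨u', v', hz⟩ := hz
  obtain ⟨x, -, y, hy, h₁, h₂⟩ := hat _ _ _ _ hw hz
  exact ⟨y, hy, congrArg Prod.snd h₁, congrArg Prod.snd h₂⟩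

theorem ProdArcTransitive.tensorAdj_fstAdj_sndAdj (hat : ProdArcTransitive Adj X Y)
    (hAut : ∀ x ∈ X, IsDigraphAut Adj (Equiv.prodCongr x 1)) :
    tensorAdj (fstAdj Adj) (sndAdj Adj) = Adj := by
  ext ⟨u, w⟩ ⟨v, z⟩
  refine ⟨?_, fun h => ⟨⟨w, z, h⟩, ⟨u, v, h⟩⟩⟩
  rintro ⟨⟨w', z', hfst⟩, ⟨u', v', hsnd⟩⟩
  obtain ⟨x, hx, y, -, h₁, h₂⟩ := hat _ _ _ _ hsnd hfst
  have hxu : x u' = u := congrArg Prod.fst h₁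
  have hxv : x v' = v := congrArg Prod.fst h₂
  simpa [hxu, hxv] using (hAut x hx (u', w) (v', z)).mp hsnd

end TensorFactors

theorem stmt6_general {Ω Δ : Type*}
    (Adj : Ω × Δ → Ω × Δ → Prop)
    (X : Subgroup (Equiv.Perm Ω)) (Y : Subgroup (Equiv.Perm Δ))
    (hAut : ∀ x ∈ X, ∀ y ∈ Y, IsDigraphAut Adj (Equiv.prodCongr x y))
    (hat : ∀ a₁ a₂ b₁ b₂ : Ω × Δ, Adj a₁ a₂ → Adj b₁ b₂ →
      ∃ x ∈ X, ∃ y ∈ Y, Equiv.prodCongr x y a₁ = b₁ ∧ Equiv.prodCongr x y a₂ = b₂) :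
    ∃ (Adj₁ : Ω → Ω → Prop) (Adj₂ : Δ → Δ → Prop),
      DigraphIso Adj (tensorAdj Adj₁ Adj₂) ∧
      (∀ x ∈ X, IsDigraphAut Adj₁ x) ∧
      (∀ u₁ u₂ v₁ v₂ : Ω, Adj₁ u₁ u₂ → Adj₁ v₁ v₂ → ∃ x ∈ X, x u₁ = v₁ ∧ x u₂ = v₂) ∧
      (∀ y ∈ Y, IsDigraphAut Adj₂ y) ∧
      (∀ w₁ w₂ z₁ z₂ : Δ, Adj₂ w₁ w₂ → Adj₂ z₁ z₂ → ∃ y ∈ Y, y w₁ = z₁ ∧ y w₂ = z₂) := by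
  have hXY : ProdArcTransitive Adj X Y := hat
  have htensor := hXY.tensorAdj_fstAdj_sndAdj fun x hx => hAut x hx 1 Y.one_mem
  refine ⟨fstAdj Adj, sndAdj Adj, ⟨Equiv.refl _, fun p q => by rw [htensor]; rfl⟩,
    fun x hx => (hAut x hx 1 Y.one_mem).fstAdj, fun _ _ _ _ => hXY.fstAdj_arcTransitive,
    fun y hy => (hAut 1 X.one_mem y hy).sndAdj, fun _ _ _ _ => hXY.sndAdj_arcTransitive⟩

theorem stmt6 {Ω Δ : Type*} [Fintype Ω] [Fintype Δ] [Nonempty Ω] [Nonempty Δ]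
    (Adj : Ω × Δ → Ω × Δ → Prop)
    (X : Subgroup (Equiv.Perm Ω)) (Y : Subgroup (Equiv.Perm Δ))
    (hAut : ∀ x ∈ X, ∀ y ∈ Y, IsDigraphAut Adj (Equiv.prodCongr x y))
    (hvt : ∀ u v : Ω × Δ, ∃ x ∈ X, ∃ y ∈ Y, Equiv.prodCongr x y u = v)
    (hat : ∀ a₁ a₂ b₁ b₂ : Ω × Δ, Adj a₁ a₂ → Adj b₁ b₂ →
      ∃ x ∈ X, ∃ y ∈ Y, Equiv.prodCongr x y a₁ = b₁ ∧ Equiv.prodCongr x y a₂ = b₂) :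
    ∃ (Adj₁ : Ω → Ω → Prop) (Adj₂ : Δ → Δ → Prop),
      DigraphIso Adj (tensorAdj Adj₁ Adj₂) ∧
      (∀ x ∈ X, IsDigraphAut Adj₁ x) ∧
      (∀ u₁ u₂ v₁ v₂ : Ω, Adj₁ u₁ u₂ → Adj₁ v₁ v₂ → ∃ x ∈ X, x u₁ = v₁ ∧ x u₂ = v₂) ∧
      (∀ y ∈ Y, IsDigraphAut Adj₂ y) ∧
      (∀ w₁ w₂ z₁ z₂ : Δ, Adj₂ w₁ w₂ → Adj₂ z₁ z₂ → ∃ y ∈ Y, y w₁ = z₁ ∧ y w₂ = z₂) :=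
  stmt6_general Adj X Y hAut hat
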